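/- arXiv:1906.09183 — 7 statements merged into one kernel-verified Lean document; each statement's English description precedes it below -/
import Mathlib

section
/- Let F ⊆ ℝ^n and G ⊆ ℝ^m be sets and h : ℝ^n → ℝ^m a map. Suppose that for every continuous function ℓ : ℝ^m → ℝ, the set of minimizers of ℓ over G equals the image under h of the set of minimizers of ℓ∘h over F, i.e. {y ∈ G : ∀y' ∈ G, ℓ(y) ≤ ℓ(y')} = h({x ∈ F : ∀x' ∈ F, ℓ(h(x)) ≤ ℓ(h(x'))}). Then G = h(F). -/
/-!
Take `ℓ = dist · z`. If `z ∈ G`, then `z` minimizes `ℓ` over `G`, so `z` lies in the image of the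
minimizers over `F`, in particular in `h '' F`. If `z = h x` with `x ∈ F`, then `x` minimizes
`ℓ ∘ h` over `F`, so `z` is a minimizer over `G`, in particular `z ∈ G`.
-/

open Set

def minimizers {α β : Type*} [Preorder β] (ℓ : α → β) (S : Set α) : Set α :=
  {x ∈ S | ∀ x' ∈ S, ℓ x ≤ ℓ x'}

theorem minimizers_subset {α β : Type*} [Preorder β] (ℓ : α → β) (S : Set α) :
    minimizers ℓ S ⊆ S :=
  fun _ hx => hx.1

theorem mem_minimizers_dist_self {α β : Type*} [PseudoMetricSpace β] (f : α → β) {S : Set α}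
    {x : α} (hx : x ∈ S) : x ∈ minimizers (fun x' => dist (f x') (f x)) S :=
  ⟨hx, fun x' _ => by simp only [dist_self, dist_nonneg]⟩

/-- Necessity direction of Lemma 1 (optimality preserving aggregation):
if for every continuous cost `ℓ` the set of minimizers of `ℓ` over `G` equals the
image under `h` of the set of minimizers of `ℓ ∘ h` over `F`, then `G = h '' F`. -/
theorem optimality_preserving_aggregation_necessity
    (n m : ℕ) (F : Set (Fin n → ℝ)) (G : Set (Fin m → ℝ))
    (h : (Fin n → ℝ) → (Fin m → ℝ))
    (hyp : ∀ ℓ : (Fin m → ℝ) → ℝ, Continuous ℓ →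
      {y ∈ G | ∀ y' ∈ G, ℓ y ≤ ℓ y'} =
        h '' {x ∈ F | ∀ x' ∈ F, ℓ (h x) ≤ ℓ (h x')}) :
    G = h '' F := by
  have hdist (z : Fin m → ℝ) :
      minimizers (dist · z) G = h '' minimizers (fun x => dist (h x) z) F :=
    hyp (dist · z) (continuous_id.dist continuous_const)
  ext z
  constructor
  · intro hz
    have hmin : z ∈ h '' minimizers (fun x => dist (h x) z) F :=
      hdist z ▸ mem_minimizers_dist_self id hz
    exact image_mono (minimizers_subset _ F) hmin
  · rintro ⟨x, hx, rfl⟩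
    have hmin : h x ∈ minimizers (dist · (h x)) G :=
      (hdist (h x)).symm ▸ mem_image_of_mem h (mem_minimizers_dist_self h hx)
    exact minimizers_subset _ G hmin
end

section
/- Theorem 1 (Existence of a consistent dispersion). Suppose Assumptions 1 and 2 hold, let E ∈ ℝ, suppose D(E) is nonempty, and let e* ∈ D(E) minimize d_l + d_u over D(E), i.e. d_l(e*) + d_u(e*) ≤ d_l(e) + d_u(e) for all e ∈ D(E). Then e* is a consistent dispersion of E; that is, max(Σ_j e̲'_j, E + δ·Σ_j p̲_j) = Σ_j max(e̲'_j, e*_j + δ·p̲_j) and min(Σ_j ē'_j, E + δ·Σ_j p̄_j) = Σ_j min(ē'_j, e*_j + δ·p̄_j). -/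
open Finset

lemma sum_two_diff {N : ℕ} (F : Fin N → ℝ → ℝ) (u v : Fin N → ℝ) (j k : Fin N)
    (hjk : j ≠ k) (h : ∀ i, i ≠ j → i ≠ k → u i = v i) :
    ∑ i, F i (u i) = (∑ i, F i (v i)) + (F j (u j) - F j (v j)) + (F k (u k) - F k (v k)) := by
  have h1 : ∑ i, (F i (u i) - F i (v i)) = (F j (u j) - F j (v j)) + (F k (u k) - F k (v k)) := by
    calc ∑ i, (F i (u i) - F i (v i))
        = ∑ i ∈ ({j, k} : Finset (Fin N)), (F i (u i) - F i (v i)) := by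
          refine (Finset.sum_subset (Finset.subset_univ _) ?_).symm
          intro x _ hx
          simp only [Finset.mem_insert, Finset.mem_singleton, not_or] at hx
          rw [h x hx.1 hx.2]; ring
      _ = (F j (u j) - F j (v j)) + (F k (u k) - F k (v k)) := Finset.sum_pair hjk
  have h2 : ∑ i, (F i (u i) - F i (v i)) = ∑ i, F i (u i) - ∑ i, F i (v i) :=
    Finset.sum_sub_distrib _ _
  linarith

lemma dispersion_part1
    (N : ℕ) (δ : ℝ) (hδ : 0 < δ)
    (plb pub elb eub elb' eub' : Fin N → ℝ)
    (hA2a : ∀ j, ∃ e : ℝ, elb j ≤ e ∧ e ≤ eub j ∧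
      elb' j ≤ e + δ * plb j ∧ e + δ * pub j ≤ eub' j)
    (hA2b1 : ∀ j, elb j + δ * plb j ≤ elb' j)
    (E : ℝ) (estar : Fin N → ℝ)
    (hmem : (∀ j, elb j ≤ estar j ∧ estar j ≤ eub j) ∧ ∑ j, estar j = E)
    (hmin : ∀ e : Fin N → ℝ,
      ((∀ j, elb j ≤ e j ∧ e j ≤ eub j) ∧ ∑ j, e j = E) →
      ((∑ j, (max (estar j + δ * plb j) (elb' j) - (estar j + δ * plb j))) +
       (∑ j, ((estar j + δ * pub j) - min (estar j + δ * pub j) (eub' j)))) ≤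
      ((∑ j, (max (e j + δ * plb j) (elb' j) - (e j + δ * plb j))) +
       (∑ j, ((e j + δ * pub j) - min (e j + δ * pub j) (eub' j))))) :
    max (∑ j, elb' j) (E + δ * ∑ j, plb j)
        = ∑ j, max (elb' j) (estar j + δ * plb j) := by
  -- key claim: no "mixed" indices
  have hsum : ∑ j, (estar j + δ * plb j) = E + δ * ∑ j, plb j := by
    rw [Finset.sum_add_distrib, ← Finset.mul_sum, hmem.2]
  have unmixed : (∀ i, elb' i ≤ estar i + δ * plb i) ∨
      (∀ i, estar i + δ * plb i ≤ elb' i) := by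
    by_contra hcon
    push_neg at hcon
    obtain ⟨⟨j, hj⟩, ⟨k, hk⟩⟩ := hcon
    -- hj : estar j + δ * plb j < elb' j  (deficit at j)
    -- hk : elb' k < estar k + δ * plb k  (surplus at k)
    have hjk : j ≠ k := by rintro rfl; linarith
    obtain ⟨e0, he0a, he0b, he0c, he0d⟩ := hA2a j
    have hje0 : estar j < e0 := by linarith
    have hjub : estar j < eub j := lt_of_lt_of_le hje0 he0b
    have hgapu : estar j + δ * pub j < eub' j := by linarith
    have hklb : elb k < estar k := by have := hA2b1 k; linarith
    set ε : ℝ := min (min (eub j - estar j) (estar k - elb k))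
        (min (min (elb' j - (estar j + δ * plb j)) (eub' j - (estar j + δ * pub j)))
             (estar k + δ * plb k - elb' k)) with hε
    have hε1 : ε ≤ eub j - estar j := le_trans (min_le_left _ _) (min_le_left _ _)
    have hε2 : ε ≤ estar k - elb k := le_trans (min_le_left _ _) (min_le_right _ _)
    have hε3 : ε ≤ elb' j - (estar j + δ * plb j) :=
      le_trans (min_le_right _ _) (le_trans (min_le_left _ _) (min_le_left _ _))
    have hε4 : ε ≤ eub' j - (estar j + δ * pub j) :=
      le_trans (min_le_right _ _) (le_trans (min_le_left _ _) (min_le_right _ _))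
    have hε5 : ε ≤ estar k + δ * plb k - elb' k :=
      le_trans (min_le_right _ _) (min_le_right _ _)
    have hεpos : 0 < ε := by
      apply lt_min (lt_min (by linarith) (by linarith))
      exact lt_min (lt_min (by linarith) (by linarith)) (by linarith)
    set u : Fin N → ℝ :=
      Function.update (Function.update estar j (estar j + ε)) k (estar k - ε) with hu
    have huj : u j = estar j + ε := by
      rw [hu, Function.update_of_ne hjk, Function.update_self]
    have huk : u k = estar k - ε := by rw [hu, Function.update_self]
    have hui : ∀ i, i ≠ j → i ≠ k → u i = estar i := by
      intro i hij hik
      rw [hu, Function.update_of_ne hik, Function.update_of_ne hij]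
    -- membership
    have humem : (∀ i, elb i ≤ u i ∧ u i ≤ eub i) ∧ ∑ i, u i = E := by
      constructor
      · intro i
        by_cases hij : i = j
        · subst hij; rw [huj]
          exact ⟨by linarith [(hmem.1 i).1], by linarith⟩
        · by_cases hik : i = k
          · subst hik; rw [huk]
            exact ⟨by linarith, by linarith [(hmem.1 i).2]⟩
          · rw [hui i hij hik]; exact hmem.1 i
      · have := sum_two_diff (fun _ x => x) u estar j k hjk hui
        simp only [huj, huk] at this
        rw [this, hmem.2]; ring
    have hle := hmin u humem
    have hL := sum_two_diff (fun i x => max (x + δ * plb i) (elb' i) - (x + δ * plb i))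
      u estar j k hjk hui
    have hU := sum_two_diff (fun i x => (x + δ * pub i) - min (x + δ * pub i) (eub' i))
      u estar j k hjk hui
    -- term computations
    have t1 : max (u j + δ * plb j) (elb' j) - (u j + δ * plb j)
        - (max (estar j + δ * plb j) (elb' j) - (estar j + δ * plb j)) = -ε := by
      rw [huj, max_eq_right (by linarith : estar j + ε + δ * plb j ≤ elb' j),
        max_eq_right (le_of_lt hj)]
      ring
    have t2 : max (u k + δ * plb k) (elb' k) - (u k + δ * plb k)
        - (max (estar k + δ * plb k) (elb' k) - (estar k + δ * plb k)) = 0 := by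
      rw [huk, max_eq_left (by linarith : elb' k ≤ estar k - ε + δ * plb k),
        max_eq_left (le_of_lt hk)]
      ring
    have t3 : (u j + δ * pub j) - min (u j + δ * pub j) (eub' j)
        - ((estar j + δ * pub j) - min (estar j + δ * pub j) (eub' j)) = 0 := by
      rw [huj, min_eq_left (by linarith : estar j + ε + δ * pub j ≤ eub' j),
        min_eq_left (le_of_lt hgapu)]
      ring
    have t4 : (u k + δ * pub k) - min (u k + δ * pub k) (eub' k)
        - ((estar k + δ * pub k) - min (estar k + δ * pub k) (eub' k)) ≤ 0 := by
      rw [huk]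
      rcases le_total (estar k - ε + δ * pub k) (eub' k) with h1 | h1 <;>
        rcases le_total (estar k + δ * pub k) (eub' k) with h2 | h2
      · rw [min_eq_left h1, min_eq_left h2]; ring_nf; linarith
      · rw [min_eq_left h1, min_eq_right h2]; linarith
      · rw [min_eq_right h1, min_eq_left h2]; linarith
      · rw [min_eq_right h1, min_eq_right h2]; linarith
    rw [hL, hU] at hle
    simp only at hle t1 t2 t3 t4
    linarith
  -- conclude
  rcases unmixed with h | h
  · have hR : ∑ i, max (elb' i) (estar i + δ * plb i) = ∑ i, (estar i + δ * plb i) :=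
      Finset.sum_congr rfl fun i _ => max_eq_right (h i)
    have hsl : ∑ i, elb' i ≤ ∑ i, (estar i + δ * plb i) :=
      Finset.sum_le_sum fun i _ => h i
    rw [hR, max_eq_right (by linarith [hsum]), hsum]
  · have hR : ∑ i, max (elb' i) (estar i + δ * plb i) = ∑ i, elb' i :=
      Finset.sum_congr rfl fun i _ => max_eq_left (h i)
    have hsl : ∑ i, (estar i + δ * plb i) ≤ ∑ i, elb' i :=
      Finset.sum_le_sum fun i _ => h i
    rw [hR, max_eq_left (by linarith [hsum])]

/-- Theorem 1 (Existence of a consistent dispersion): under Assumptions 1 and 2,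
any minimizer `e*` of `d_l + d_u` over the set of feasible dispersions `D(E)`
is a consistent dispersion of `E`. -/
theorem existence_of_consistent_dispersion
    (N : ℕ) (hN : 1 ≤ N) (δ : ℝ) (hδ : 0 < δ)
    (plb pub elb eub elb' eub' : Fin N → ℝ)
    (hp : ∀ j, plb j ≤ pub j) (he : ∀ j, elb j ≤ eub j)
    (he' : ∀ j, elb' j ≤ eub' j)
    -- Assumption 1 (consistency of constraints)
    (hA1 : ∀ j, ∀ e : ℝ, elb j ≤ e → e ≤ eub j →
      max (elb' j) (e + δ * plb j) ≤ min (eub' j) (e + δ * pub j))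
    -- Assumption 2(a)
    (hA2a : ∀ j, ∃ e : ℝ, elb j ≤ e ∧ e ≤ eub j ∧
      elb' j ≤ e + δ * plb j ∧ e + δ * pub j ≤ eub' j)
    -- Assumption 2(b)
    (hA2b : ∀ j, elb j + δ * plb j ≤ elb' j ∧ eub' j ≤ eub j + δ * pub j)
    (E : ℝ) (estar : Fin N → ℝ)
    -- e* ∈ D(E)
    (hmem : (∀ j, elb j ≤ estar j ∧ estar j ≤ eub j) ∧ ∑ j, estar j = E)
    -- e* minimizes d_l + d_u over D(E)
    (hmin : ∀ e : Fin N → ℝ,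
      ((∀ j, elb j ≤ e j ∧ e j ≤ eub j) ∧ ∑ j, e j = E) →
      ((∑ j, (max (estar j + δ * plb j) (elb' j) - (estar j + δ * plb j))) +
       (∑ j, ((estar j + δ * pub j) - min (estar j + δ * pub j) (eub' j)))) ≤
      ((∑ j, (max (e j + δ * plb j) (elb' j) - (e j + δ * plb j))) +
       (∑ j, ((e j + δ * pub j) - min (e j + δ * pub j) (eub' j))))) :
    max (∑ j, elb' j) (E + δ * ∑ j, plb j)
        = ∑ j, max (elb' j) (estar j + δ * plb j) ∧
    min (∑ j, eub' j) (E + δ * ∑ j, pub j)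
        = ∑ j, min (eub' j) (estar j + δ * pub j) := by
  constructor
  · exact dispersion_part1 N δ hδ plb pub elb eub elb' eub'
      hA2a (fun j => (hA2b j).1) E estar hmem hmin
  · -- apply part 1 to the negated data
    have keyL : ∀ x : Fin N → ℝ,
        ∑ j, (max (x j + δ * -pub j) (-eub' j) - (x j + δ * -pub j))
        = ∑ j, ((-x j + δ * pub j) - min (-x j + δ * pub j) (eub' j)) := by
      intro x
      refine Finset.sum_congr rfl fun j _ => ?_
      rw [show x j + δ * -pub j = -(-x j + δ * pub j) by ring,
        show -eub' j = -(eub' j) from rfl, max_neg_neg]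
      ring
    have keyU : ∀ x : Fin N → ℝ,
        ∑ j, ((x j + δ * -plb j) - min (x j + δ * -plb j) (-elb' j))
        = ∑ j, (max (-x j + δ * plb j) (elb' j) - (-x j + δ * plb j)) := by
      intro x
      refine Finset.sum_congr rfl fun j _ => ?_
      rw [show x j + δ * -plb j = -(-x j + δ * plb j) by ring,
        show -elb' j = -(elb' j) from rfl, min_neg_neg]
      ring
    have hA2a' : ∀ j, ∃ e : ℝ, -eub j ≤ e ∧ e ≤ -elb j ∧
        -eub' j ≤ e + δ * -pub j ∧ e + δ * -plb j ≤ -elb' j := by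
      intro j
      obtain ⟨e0, h1, h2, h3, h4⟩ := hA2a j
      exact ⟨-e0, by linarith, by linarith, by linarith, by linarith⟩
    have hA2b1' : ∀ j, -eub j + δ * -pub j ≤ -eub' j := fun j => by
      have := (hA2b j).2; linarith
    have hmem' : (∀ j, -eub j ≤ -estar j ∧ -estar j ≤ -elb j) ∧
        ∑ j, -estar j = -E := by
      refine ⟨fun j => ⟨by linarith [(hmem.1 j).2], by linarith [(hmem.1 j).1]⟩, ?_⟩
      rw [Finset.sum_neg_distrib, hmem.2]
    have hmin' : ∀ e : Fin N → ℝ,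
        ((∀ j, -eub j ≤ e j ∧ e j ≤ -elb j) ∧ ∑ j, e j = -E) →
        ((∑ j, (max (-estar j + δ * -pub j) (-eub' j) - (-estar j + δ * -pub j))) +
         (∑ j, ((-estar j + δ * -plb j) - min (-estar j + δ * -plb j) (-elb' j)))) ≤
        ((∑ j, (max (e j + δ * -pub j) (-eub' j) - (e j + δ * -pub j))) +
         (∑ j, ((e j + δ * -plb j) - min (e j + δ * -plb j) (-elb' j)))) := by
      intro e hmemE
      have hm : (∀ j, elb j ≤ -e j ∧ -e j ≤ eub j) ∧ ∑ j, -e j = E := by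
        refine ⟨fun j => ⟨by linarith [(hmemE.1 j).2], by linarith [(hmemE.1 j).1]⟩, ?_⟩
        rw [Finset.sum_neg_distrib, hmemE.2, neg_neg]
      have hm2 := hmin (fun j => -e j) hm
      rw [keyL e, keyU e, keyL (fun j => -estar j), keyU (fun j => -estar j)]
      simp only [neg_neg] at *
      linarith
    have h2 := dispersion_part1 N δ hδ (fun j => -pub j) (fun j => -plb j)
      (fun j => -eub j) (fun j => -elb j) (fun j => -eub' j) (fun j => -elb' j)
      hA2a' hA2b1' (-E) (fun j => -estar j) hmem' hmin'
    have e1 : ∑ j, -eub' j = -(∑ j, eub' j) := Finset.sum_neg_distrib _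
    have e2 : -E + δ * ∑ j, -pub j = -(E + δ * ∑ j, pub j) := by
      rw [Finset.sum_neg_distrib]; ring
    have e3 : ∑ j, max (-eub' j) (-estar j + δ * -pub j)
        = -(∑ j, min (eub' j) (estar j + δ * pub j)) := by
      rw [← Finset.sum_neg_distrib]
      refine Finset.sum_congr rfl fun j _ => ?_
      rw [show -estar j + δ * -pub j = -(estar j + δ * pub j) by ring,
        show -eub' j = -(eub' j) from rfl, max_neg_neg]
    rw [e1, e2, e3, max_neg_neg] at h2
    exact neg_injective h2
end

section
/- Lemma (Case (i), lower bound). Suppose Assumptions 1 and 2 hold, let E ∈ ℝ, and let e* ∈ D(E) minimize d_l + d_u over D(E). If E + δ·Σ_j p̲_j ≥ Σ_j e̲'_j, then Σ_j max(e̲'_j, e*_j + δ·p̲_j) = E + δ·Σ_j p̲_j; equivalently, e*_j + δ·p̲_j ≥ e̲'_j for every j. -/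
/-!
If the minimiser left some device `j` with `e*ⱼ + δ p̲ⱼ < e̲'ⱼ`, the case hypothesis
`Σ e̲'ᵢ ≤ E + δ Σ p̲ᵢ` forces another device `k` with `e*ₖ + δ p̲ₖ > e̲'ₖ`. Moving a small amount
`ε` of energy from `k` to `j` keeps the dispersion feasible (Assumption 2), lowers `d_l` by
exactly `ε` and does not increase `d_u`, contradicting minimality.
-/

open Finset

section Transfer

variable {ι : Type*} [DecidableEq ι]

def transfer (e : ι → ℝ) (k j : ι) (ε : ℝ) : ι → ℝ :=
  e + Pi.single j ε - Pi.single k ε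

variable {e : ι → ℝ} {k j : ι} {ε : ℝ}

lemma sum_transfer [Fintype ι] : ∑ i, transfer e k j ε i = ∑ i, e i := by
  simp [transfer, sum_add_distrib, sum_sub_distrib]

lemma transfer_apply_target (hjk : j ≠ k) : transfer e k j ε j = e j + ε := by
  simp [transfer, hjk]

lemma transfer_apply_source (hjk : j ≠ k) : transfer e k j ε k = e k - ε := by
  simp [transfer, hjk.symm]

lemma transfer_apply_of_ne {i : ι} (hij : i ≠ j) (hik : i ≠ k) : transfer e k j ε i = e i := by
  simp [transfer, hij, hik]

end Transfer

lemma monotone_sub_min (c : ℝ) : Monotone fun x : ℝ => x - min x c := by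
  intro x y hxy
  rcases le_total x c with hx | hx <;> rcases le_total y c with hy | hy <;>
    simp only [min_eq_left, min_eq_right, *] <;> linarith

section Dispersion

variable {ι : Type*} [Fintype ι]

/-- The feasible dispersions `D(E)` of the total energy `E` within the bounds `lo ≤ e ≤ hi`. -/
def dispersions (lo hi : ι → ℝ) (E : ℝ) : Set (ι → ℝ) :=
  {e | (∀ j, lo j ≤ e j ∧ e j ≤ hi j) ∧ ∑ j, e j = E}

/-- `d_l`, with `a = δ • p̲` and `c = e̲'`. -/
def lowerDeficit (c a e : ι → ℝ) : ℝ :=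
  ∑ j, (max (e j + a j) (c j) - (e j + a j))

/-- `d_u`, with `b = δ • p̄` and `u = ē'`. -/
def upperExcess (u b e : ι → ℝ) : ℝ :=
  ∑ j, ((e j + b j) - min (e j + b j) (u j))

variable [DecidableEq ι] {e : ι → ℝ} {k j : ι} {ε : ℝ}

lemma lowerDeficit_transfer {c a : ι → ℝ} (hjk : j ≠ k) (hj : e j + ε + a j ≤ c j)
    (hk : c k ≤ e k - ε + a k) (hε : 0 ≤ ε) :
    lowerDeficit c a (transfer e k j ε) = lowerDeficit c a e - ε := by
  have hterm : ∀ i, max (transfer e k j ε i + a i) (c i) - (transfer e k j ε i + a i) =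
      max (e i + a i) (c i) - (e i + a i) - (Pi.single j ε : ι → ℝ) i := by
    intro i
    rcases eq_or_ne i j with rfl | hij
    · rw [transfer_apply_target hjk, max_eq_right hj, max_eq_right (by linarith),
        Pi.single_eq_same]
      ring
    rcases eq_or_ne i k with rfl | hik
    · rw [transfer_apply_source hjk, max_eq_left hk, max_eq_left (by linarith),
        Pi.single_eq_of_ne hij]
      ring
    · rw [transfer_apply_of_ne hij hik, Pi.single_eq_of_ne hij, sub_zero]
  simp only [lowerDeficit, hterm, sum_sub_distrib, sum_pi_single', mem_univ, if_true]

lemma upperExcess_transfer_le {u b : ι → ℝ} (hjk : j ≠ k) (hj : e j + ε + b j ≤ u j)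
    (hε : 0 ≤ ε) : upperExcess u b (transfer e k j ε) ≤ upperExcess u b e := by
  refine sum_le_sum fun i _ => ?_
  rcases eq_or_ne i j with rfl | hij
  · rw [transfer_apply_target hjk, min_eq_left hj, sub_self]
    exact sub_nonneg.2 (min_le_left _ _)
  rcases eq_or_ne i k with rfl | hik
  · rw [transfer_apply_source hjk]
    exact monotone_sub_min (u i) (by linarith)
  · rw [transfer_apply_of_ne hij hik]

lemma transfer_mem_dispersions {lo hi : ι → ℝ} {E : ℝ} (he : e ∈ dispersions lo hi E)
    (hjk : j ≠ k) (hj : e j + ε ≤ hi j) (hk : lo k ≤ e k - ε) (hε : 0 ≤ ε) :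
    transfer e k j ε ∈ dispersions lo hi E := by
  refine ⟨fun i => ?_, sum_transfer.trans he.2⟩
  rcases eq_or_ne i j with rfl | hij
  · rw [transfer_apply_target hjk]
    exact ⟨by linarith [(he.1 i).1], hj⟩
  rcases eq_or_ne i k with rfl | hik
  · rw [transfer_apply_source hjk]
    exact ⟨hk, by linarith [(he.1 i).2]⟩
  · rw [transfer_apply_of_ne hij hik]
    exact he.1 i

lemma le_add_of_minimizes {lo hi c u a b : ι → ℝ} {E : ℝ} {e : ι → ℝ}
    (hreach : ∀ j, ∃ x, x ≤ hi j ∧ c j ≤ x + a j ∧ x + b j ≤ u j)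
    (hlo : ∀ j, lo j + a j ≤ c j) (hmem : e ∈ dispersions lo hi E)
    (hmin : ∀ e' ∈ dispersions lo hi E,
      lowerDeficit c a e + upperExcess u b e ≤ lowerDeficit c a e' + upperExcess u b e')
    (hcase : ∑ j, c j ≤ E + ∑ j, a j) (j : ι) : c j ≤ e j + a j := by
  by_contra! hj
  obtain ⟨k, hk⟩ : ∃ k, c k < e k + a k := by
    by_contra! hk
    have hlt := sum_lt_sum (fun i _ => hk i) ⟨j, mem_univ j, hj⟩
    rw [sum_add_distrib, hmem.2] at hlt
    linarith
  have hjk : j ≠ k := by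
    rintro rfl
    linarith
  obtain ⟨x, hx_hi, hx_c, hx_u⟩ := hreach j
  obtain ⟨ε, hε, hεj, hεk⟩ : ∃ ε > 0, e j + ε + a j ≤ c j ∧ c k ≤ e k - ε + a k :=
    ⟨min (c j - (e j + a j)) (e k + a k - c k), lt_min (by linarith) (by linarith),
      by linarith [min_le_left (c j - (e j + a j)) (e k + a k - c k)],
      by linarith [min_le_right (c j - (e j + a j)) (e k + a k - c k)]⟩
  have hle := hmin _ (transfer_mem_dispersions hmem hjk (by linarith) (by linarith [hlo k]) hε.le)
  rw [lowerDeficit_transfer hjk hεj hεk hε.le] at hle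
  linarith [upperExcess_transfer_le (e := e) (u := u) (b := b) hjk (by linarith) hε.le]

end Dispersion

theorem case_i_lower_bound_general
    (N : ℕ) (δ : ℝ)
    (plb pub elb eub elb' eub' : Fin N → ℝ)
    -- Assumption 2(a)
    (hA2a : ∀ j, ∃ e : ℝ, elb j ≤ e ∧ e ≤ eub j ∧
      elb' j ≤ e + δ * plb j ∧ e + δ * pub j ≤ eub' j)
    -- Assumption 2(b)
    (hA2b : ∀ j, elb j + δ * plb j ≤ elb' j ∧ eub' j ≤ eub j + δ * pub j)
    (E : ℝ) (estar : Fin N → ℝ)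
    -- e* ∈ D(E)
    (hmem : (∀ j, elb j ≤ estar j ∧ estar j ≤ eub j) ∧ ∑ j, estar j = E)
    -- e* minimizes d_l + d_u over D(E)
    (hmin : ∀ e : Fin N → ℝ,
      ((∀ j, elb j ≤ e j ∧ e j ≤ eub j) ∧ ∑ j, e j = E) →
      ((∑ j, (max (estar j + δ * plb j) (elb' j) - (estar j + δ * plb j))) +
       (∑ j, ((estar j + δ * pub j) - min (estar j + δ * pub j) (eub' j)))) ≤
      ((∑ j, (max (e j + δ * plb j) (elb' j) - (e j + δ * plb j))) +
       (∑ j, ((e j + δ * pub j) - min (e j + δ * pub j) (eub' j)))))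
    -- case hypothesis
    (hcase : E + δ * ∑ j, plb j ≥ ∑ j, elb' j) :
    (∑ j, max (elb' j) (estar j + δ * plb j) = E + δ * ∑ j, plb j) ∧
    (∀ j, estar j + δ * plb j ≥ elb' j) := by
  have hlower : ∀ j, elb' j ≤ estar j + δ * plb j :=
    le_add_of_minimizes (lo := elb) (hi := eub)
      (fun j => let ⟨x, _, hx⟩ := hA2a j; ⟨x, hx⟩) (fun j => (hA2b j).1) hmem hmin
      (by rwa [← mul_sum])
  refine ⟨?_, hlower⟩
  rw [sum_congr rfl fun j _ => max_eq_right (hlower j), sum_add_distrib,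
    ← mul_sum, hmem.2]

/-- Lemma 2(a) (Case (i), lower bound). -/
theorem case_i_lower_bound
    (N : ℕ) (hN : 1 ≤ N) (δ : ℝ) (hδ : 0 < δ)
    (plb pub elb eub elb' eub' : Fin N → ℝ)
    (hp : ∀ j, plb j ≤ pub j) (he : ∀ j, elb j ≤ eub j)
    (he' : ∀ j, elb' j ≤ eub' j)
    -- Assumption 1 (consistency of constraints)
    (hA1 : ∀ j, ∀ e : ℝ, elb j ≤ e → e ≤ eub j →
      max (elb' j) (e + δ * plb j) ≤ min (eub' j) (e + δ * pub j))
    -- Assumption 2(a)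
    (hA2a : ∀ j, ∃ e : ℝ, elb j ≤ e ∧ e ≤ eub j ∧
      elb' j ≤ e + δ * plb j ∧ e + δ * pub j ≤ eub' j)
    -- Assumption 2(b)
    (hA2b : ∀ j, elb j + δ * plb j ≤ elb' j ∧ eub' j ≤ eub j + δ * pub j)
    (E : ℝ) (estar : Fin N → ℝ)
    -- e* ∈ D(E)
    (hmem : (∀ j, elb j ≤ estar j ∧ estar j ≤ eub j) ∧ ∑ j, estar j = E)
    -- e* minimizes d_l + d_u over D(E)
    (hmin : ∀ e : Fin N → ℝ,
      ((∀ j, elb j ≤ e j ∧ e j ≤ eub j) ∧ ∑ j, e j = E) →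
      ((∑ j, (max (estar j + δ * plb j) (elb' j) - (estar j + δ * plb j))) +
       (∑ j, ((estar j + δ * pub j) - min (estar j + δ * pub j) (eub' j)))) ≤
      ((∑ j, (max (e j + δ * plb j) (elb' j) - (e j + δ * plb j))) +
       (∑ j, ((e j + δ * pub j) - min (e j + δ * pub j) (eub' j)))))
    -- case hypothesis
    (hcase : E + δ * ∑ j, plb j ≥ ∑ j, elb' j) :
    (∑ j, max (elb' j) (estar j + δ * plb j) = E + δ * ∑ j, plb j) ∧
    (∀ j, estar j + δ * plb j ≥ elb' j) :=
  case_i_lower_bound_general N δ plb pub elb eub elb' eub' hA2a hA2b E estar hmem hmin hcase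
end

section
/- Lemma (Case (ii), lower bound). Suppose Assumptions 1 and 2 hold, let E ∈ ℝ, and let e* ∈ D(E) minimize d_l + d_u over D(E). If E + δ·Σ_j p̲_j < Σ_j e̲'_j, then Σ_j max(e̲'_j, e*_j + δ·p̲_j) = Σ_j e̲'_j; equivalently, e*_j + δ·p̲_j ≤ e̲'_j for every j. -/
/-!
Put `u j := e̲'_j - δ p̲_j`. By Assumption 2 the box `[e̲, u]` lies in the energy bounds and every
point of it keeps `e + δ p̄ ≤ ē'`, and the case hypothesis says `E < ∑ u`, so some `e ∈ D(E)` lies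
in that box. For such an `e` the upper cost `d_u` vanishes and the lower cost is
`∑ e̲' - (E + δ ∑ p̲)`, whereas `d_l(e*) = ∑ max(e*_j + δ p̲_j, e̲'_j) - (E + δ ∑ p̲)`. Minimality
of `e*` therefore gives `∑ max(e*_j + δ p̲_j, e̲'_j) ≤ ∑ e̲'`, which forces every maximum to be
`e̲'_j`.
-/

open Finset

theorem exists_mem_Icc_sum_eq {ι : Type*} [Fintype ι] {lo hi : ι → ℝ} (h : lo ≤ hi) {E : ℝ}
    (hE : E ∈ Set.Icc (∑ i, lo i) (∑ i, hi i)) : ∃ e ∈ Set.Icc lo hi, ∑ i, e i = E :=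
  (convex_Icc lo hi).isPreconnected.intermediate_value (Set.left_mem_Icc.2 h)
    (Set.right_mem_Icc.2 h) (by fun_prop) hE

theorem sum_max_le_sum_iff {ι M : Type*} [AddCommMonoid M] [LinearOrder M]
    [IsOrderedCancelAddMonoid M] {s : Finset ι} {a b : ι → M} :
    ∑ i ∈ s, max (a i) (b i) ≤ ∑ i ∈ s, b i ↔ ∀ i ∈ s, a i ≤ b i := by
  constructor
  · intro h i hi
    have hle : ∀ i ∈ s, b i ≤ max (a i) (b i) := fun i _ => le_max_right _ _
    have heq := (sum_eq_sum_iff_of_le hle).1 (le_antisymm (sum_le_sum hle) h) i hi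
    exact max_eq_right_iff.1 heq.symm
  · intro h
    exact (sum_congr rfl fun i hi => max_eq_right (h i hi)).le

theorem sum_max_le_of_sum_max_sub_le {ι : Type*} {s : Finset ι} {a b c : ι → ℝ}
    (hab : ∑ i ∈ s, a i = ∑ i ∈ s, b i) (hb : ∀ i ∈ s, b i ≤ c i)
    (h : ∑ i ∈ s, (max (a i) (c i) - a i) ≤ ∑ i ∈ s, (max (b i) (c i) - b i)) :
    ∑ i ∈ s, max (a i) (c i) ≤ ∑ i ∈ s, c i := by
  have hbc : ∑ i ∈ s, (max (b i) (c i) - b i) = ∑ i ∈ s, c i - ∑ i ∈ s, b i := by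
    rw [← sum_sub_distrib]
    exact sum_congr rfl fun i hi => by rw [max_eq_right (hb i hi)]
  rw [hbc, sum_sub_distrib] at h
  linarith

theorem case_ii_lower_bound_general
    (N : ℕ) (δ : ℝ)
    (plb pub elb eub elb' eub' : Fin N → ℝ)
    -- Assumption 2(a)
    (hA2a : ∀ j, ∃ e : ℝ, elb j ≤ e ∧ e ≤ eub j ∧
      elb' j ≤ e + δ * plb j ∧ e + δ * pub j ≤ eub' j)
    -- Assumption 2(b)
    (hA2b : ∀ j, elb j + δ * plb j ≤ elb' j ∧ eub' j ≤ eub j + δ * pub j)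
    (E : ℝ) (estar : Fin N → ℝ)
    -- e* ∈ D(E)
    (hmem : (∀ j, elb j ≤ estar j ∧ estar j ≤ eub j) ∧ ∑ j, estar j = E)
    -- e* minimizes d_l + d_u over D(E)
    (hmin : ∀ e : Fin N → ℝ,
      ((∀ j, elb j ≤ e j ∧ e j ≤ eub j) ∧ ∑ j, e j = E) →
      ((∑ j, (max (estar j + δ * plb j) (elb' j) - (estar j + δ * plb j))) +
       (∑ j, ((estar j + δ * pub j) - min (estar j + δ * pub j) (eub' j)))) ≤
      ((∑ j, (max (e j + δ * plb j) (elb' j) - (e j + δ * plb j))) +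
       (∑ j, ((e j + δ * pub j) - min (e j + δ * pub j) (eub' j)))))
    -- case hypothesis
    (hcase : E + δ * ∑ j, plb j < ∑ j, elb' j) :
    (∑ j, max (elb' j) (estar j + δ * plb j) = ∑ j, elb' j) ∧
    (∀ j, estar j + δ * plb j ≤ elb' j) := by
  obtain ⟨hbox, hsum⟩ := hmem
  set u : Fin N → ℝ := fun j => elb' j - δ * plb j
  have hlo_u : ∀ j, elb j ≤ u j := fun j => by linarith [(hA2b j).1]
  have hu_eub : ∀ j, u j ≤ eub j ∧ u j + δ * pub j ≤ eub' j := fun j => by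
    obtain ⟨x, -, hx, hxl, hxu⟩ := hA2a j
    constructor <;> linarith
  have hE : E ∈ Set.Icc (∑ j, elb j) (∑ j, u j) := by
    refine ⟨hsum ▸ sum_le_sum fun j _ => (hbox j).1, ?_⟩
    simp only [u, sum_sub_distrib, ← mul_sum]
    linarith
  obtain ⟨e, ⟨hle, hue⟩, he_sum⟩ := exists_mem_Icc_sum_eq hlo_u hE
  have hcost := hmin e ⟨fun j => ⟨hle j, (hue j).trans (hu_eub j).1⟩, he_sum⟩
  have hdu_e : ∑ j, ((e j + δ * pub j) - min (e j + δ * pub j) (eub' j)) = 0 :=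
    sum_eq_zero fun j _ => by
      rw [min_eq_left (by linarith [hue j, (hu_eub j).2]), sub_self]
  have hdu_star : 0 ≤ ∑ j, ((estar j + δ * pub j) - min (estar j + δ * pub j) (eub' j)) :=
    sum_nonneg fun j _ => sub_nonneg.2 (min_le_left _ _)
  have hlow : ∀ j, estar j + δ * plb j ≤ elb' j := by
    refine fun j => sum_max_le_sum_iff.1
      (sum_max_le_of_sum_max_sub_le (a := fun j => estar j + δ * plb j)
        (b := fun j => e j + δ * plb j) ?_ ?_ ?_) j (mem_univ j)
    · rw [sum_add_distrib, sum_add_distrib, hsum, he_sum]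
    · exact fun j _ => by linarith [hue j]
    · linarith
  exact ⟨sum_congr rfl fun j _ => max_eq_left (hlow j), hlow⟩

/-- Lemma 3(a) (Case (ii), lower bound). -/
theorem case_ii_lower_bound
    (N : ℕ) (hN : 1 ≤ N) (δ : ℝ) (hδ : 0 < δ)
    (plb pub elb eub elb' eub' : Fin N → ℝ)
    (hp : ∀ j, plb j ≤ pub j) (he : ∀ j, elb j ≤ eub j)
    (he' : ∀ j, elb' j ≤ eub' j)
    -- Assumption 1 (consistency of constraints)
    (hA1 : ∀ j, ∀ e : ℝ, elb j ≤ e → e ≤ eub j →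
      max (elb' j) (e + δ * plb j) ≤ min (eub' j) (e + δ * pub j))
    -- Assumption 2(a)
    (hA2a : ∀ j, ∃ e : ℝ, elb j ≤ e ∧ e ≤ eub j ∧
      elb' j ≤ e + δ * plb j ∧ e + δ * pub j ≤ eub' j)
    -- Assumption 2(b)
    (hA2b : ∀ j, elb j + δ * plb j ≤ elb' j ∧ eub' j ≤ eub j + δ * pub j)
    (E : ℝ) (estar : Fin N → ℝ)
    -- e* ∈ D(E)
    (hmem : (∀ j, elb j ≤ estar j ∧ estar j ≤ eub j) ∧ ∑ j, estar j = E)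
    -- e* minimizes d_l + d_u over D(E)
    (hmin : ∀ e : Fin N → ℝ,
      ((∀ j, elb j ≤ e j ∧ e j ≤ eub j) ∧ ∑ j, e j = E) →
      ((∑ j, (max (estar j + δ * plb j) (elb' j) - (estar j + δ * plb j))) +
       (∑ j, ((estar j + δ * pub j) - min (estar j + δ * pub j) (eub' j)))) ≤
      ((∑ j, (max (e j + δ * plb j) (elb' j) - (e j + δ * plb j))) +
       (∑ j, ((e j + δ * pub j) - min (e j + δ * pub j) (eub' j)))))
    -- case hypothesis
    (hcase : E + δ * ∑ j, plb j < ∑ j, elb' j) :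
    (∑ j, max (elb' j) (estar j + δ * plb j) = ∑ j, elb' j) ∧
    (∀ j, estar j + δ * plb j ≤ elb' j) :=
  case_ii_lower_bound_general N δ plb pub elb eub elb' eub' hA2a hA2b E estar hmem hmin hcase
end

section
/- Theorem 2 (Recursive existence of consistent dispersions). Suppose Assumptions 1 and 2 hold for the transition from the next step to the step after (i.e. with the boxes [e̲'_j, ē'_j] as current energy bounds, the boxes [e̲''_j, ē''_j] as subsequent energy bounds, and the power bounds q̲_j ≤ q̄_j). Let E, E' ∈ ℝ, let e ∈ D(E) be a consistent dispersion of E (for the current transition), and suppose Σ_j e̲'_j ≤ E' ≤ Σ_j ē'_j. Then there exists a vector e' ∈ ℝ^N with e̲'_j ≤ e'_j ≤ ē'_j for all j and Σ_j e'_j = E', which is a consistent dispersion of E' for the next transition; that is, max(Σ_j e̲''_j, E' + δ·Σ_j q̲_j) = Σ_j max(e̲''_j, e'_j + δ·q̲_j) and min(Σ_j ē''_j, E' + δ·Σ_j q̄_j) = Σ_j min(ē''_j, e'_j + δ·q̄_j). -/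
/-!
Write `L j = e̲''_j - δ q̲_j` and `U j = ē''_j - δ q̄_j`. Assumption 2 gives the chain
`e̲' ≤ L ≤ U ≤ ē'`, and a dispersion `e'` is consistent for the next transition as soon as it
lies, coordinatewise, on one side of `L` and on one side of `U`: then every `max` resp. `min`
picks the same argument in each coordinate, and so commutes with the sum. Such an `e'` with
sum `E'` is found in whichever of the boxes `[e̲', L]`, `[L, U]`, `[U, ē']` has sums bracketing `E'`.
-/

open Finset

variable {ι : Type*} [Fintype ι]

theorem exists_le_le_sum_eq {a b : ι → ℝ} (hab : a ≤ b) {E : ℝ}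
    (ha : ∑ j, a j ≤ E) (hb : E ≤ ∑ j, b j) :
    ∃ x : ι → ℝ, a ≤ x ∧ x ≤ b ∧ ∑ j, x j = E := by
  have hgap : ∑ j, (b j - a j) = ∑ j, b j - ∑ j, a j := sum_sub_distrib _ _
  rcases (sum_nonneg fun j _ => sub_nonneg.2 (hab j) : 0 ≤ ∑ j, (b j - a j)).eq_or_lt
    with hzero | hpos
  · exact ⟨a, le_rfl, hab, by linarith⟩
  set t := (E - ∑ j, a j) / ∑ j, (b j - a j)
  have ht₀ : 0 ≤ t := div_nonneg (by linarith) hpos.le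
  have ht₁ : t ≤ 1 := (div_le_one hpos).2 (by linarith)
  refine ⟨fun j => a j + t * (b j - a j), fun j => ?_, fun j => ?_, ?_⟩
  · nlinarith [hab j]
  · nlinarith [hab j]
  · rw [sum_add_distrib, ← mul_sum, div_mul_cancel₀ _ hpos.ne']
    ring

theorem max_sum_eq_sum_max {a x : ι → ℝ} (h : x ≤ a ∨ a ≤ x) :
    max (∑ j, a j) (∑ j, x j) = ∑ j, max (a j) (x j) := by
  rcases h with h | h
  · rw [max_eq_left (sum_le_sum fun j _ => h j)]
    exact sum_congr rfl fun j _ => (max_eq_left (h j)).symm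
  · rw [max_eq_right (sum_le_sum fun j _ => h j)]
    exact sum_congr rfl fun j _ => (max_eq_right (h j)).symm

theorem min_sum_eq_sum_min {a x : ι → ℝ} (h : x ≤ a ∨ a ≤ x) :
    min (∑ j, a j) (∑ j, x j) = ∑ j, min (a j) (x j) := by
  rcases h with h | h
  · rw [min_eq_right (sum_le_sum fun j _ => h j)]
    exact sum_congr rfl fun j _ => (min_eq_right (h j)).symm
  · rw [min_eq_left (sum_le_sum fun j _ => h j)]
    exact sum_congr rfl fun j _ => (min_eq_left (h j)).symm

theorem exists_sum_eq_comparable_of_chain {a l u b : ι → ℝ}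
    (hal : a ≤ l) (hlu : l ≤ u) (hub : u ≤ b) {E : ℝ}
    (ha : ∑ j, a j ≤ E) (hb : E ≤ ∑ j, b j) :
    ∃ x : ι → ℝ, a ≤ x ∧ x ≤ b ∧ ∑ j, x j = E ∧ (x ≤ l ∨ l ≤ x) ∧ (x ≤ u ∨ u ≤ x) := by
  rcases le_total E (∑ j, l j) with hl | hl
  · obtain ⟨x, hax, hxl, hx⟩ := exists_le_le_sum_eq hal ha hl
    exact ⟨x, hax, hxl.trans (hlu.trans hub), hx, .inl hxl, .inl (hxl.trans hlu)⟩
  rcases le_total E (∑ j, u j) with hu | hu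
  · obtain ⟨x, hlx, hxu, hx⟩ := exists_le_le_sum_eq hlu hl hu
    exact ⟨x, hal.trans hlx, hxu.trans hub, hx, .inr hlx, .inl hxu⟩
  · obtain ⟨x, hux, hxb, hx⟩ := exists_le_le_sum_eq hub hu hb
    exact ⟨x, hal.trans (hlu.trans hux), hxb, hx, .inr (hlu.trans hux), .inr hux⟩

theorem recursive_existence_of_consistent_dispersions_general
    (N : ℕ) (δ : ℝ)
    (qlb qub elb' eub' elb'' eub'' : Fin N → ℝ)
    -- Assumption 2(a) for the next transition
    (hA2a : ∀ j, ∃ x : ℝ, elb' j ≤ x ∧ x ≤ eub' j ∧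
      elb'' j ≤ x + δ * qlb j ∧ x + δ * qub j ≤ eub'' j)
    -- Assumption 2(b) for the next transition
    (hA2b : ∀ j, elb' j + δ * qlb j ≤ elb'' j ∧ eub'' j ≤ eub' j + δ * qub j)
    (E' : ℝ)
    (hE' : ∑ j, elb' j ≤ E' ∧ E' ≤ ∑ j, eub' j) :
    ∃ e' : Fin N → ℝ,
      (∀ j, elb' j ≤ e' j ∧ e' j ≤ eub' j) ∧ (∑ j, e' j = E') ∧
      max (∑ j, elb'' j) (E' + δ * ∑ j, qlb j)
        = ∑ j, max (elb'' j) (e' j + δ * qlb j) ∧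
      min (∑ j, eub'' j) (E' + δ * ∑ j, qub j)
        = ∑ j, min (eub'' j) (e' j + δ * qub j) := by
  have hlbL : elb' ≤ fun j => elb'' j - δ * qlb j := fun j => by
    linarith [(hA2b j).1]
  have hLU : (fun j => elb'' j - δ * qlb j) ≤ fun j => eub'' j - δ * qub j := fun j => by
    obtain ⟨x, -, -, hlo, hhi⟩ := hA2a j
    linarith
  have hUub : (fun j => eub'' j - δ * qub j) ≤ eub' := fun j => by
    linarith [(hA2b j).2]
  obtain ⟨e', hlb, hub, hsum, hL, hU⟩ :=
    exists_sum_eq_comparable_of_chain hlbL hLU hUub hE'.1 hE'.2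
  have hshift (c : Fin N → ℝ) : E' + δ * ∑ j, c j = ∑ j, (e' j + δ * c j) := by
    rw [sum_add_distrib, hsum, mul_sum]
  have hcomparable (a c : Fin N → ℝ) :
      ((e' ≤ fun j => a j - δ * c j) ∨ (fun j => a j - δ * c j) ≤ e') →
        ((fun j => e' j + δ * c j) ≤ a ∨ a ≤ fun j => e' j + δ * c j) :=
    Or.imp (fun h j => by have := h j; dsimp only at this ⊢; linarith)
      (fun h j => by have := h j; dsimp only at this ⊢; linarith)
  refine ⟨e', fun j => ⟨hlb j, hub j⟩, hsum, ?_, ?_⟩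
  · rw [hshift]
    exact max_sum_eq_sum_max (hcomparable _ _ hL)
  · rw [hshift]
    exact min_sum_eq_sum_min (hcomparable _ _ hU)

/-- Theorem 2 (Recursive existence of consistent dispersions): if Assumptions 1 and 2
hold for the next transition (current boxes `[elb', eub']`, next boxes `[elb'', eub'']`,
powers `[qlb, qub]`), `e` is a consistent dispersion of `E` for the current transition,
and `∑ elb' ≤ E' ≤ ∑ eub'`, then there exists a consistent dispersion `e'` of `E'`
for the next transition. -/
theorem recursive_existence_of_consistent_dispersions
    (N : ℕ) (hN : 1 ≤ N) (δ : ℝ) (hδ : 0 < δ)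
    (plb pub qlb qub elb eub elb' eub' elb'' eub'' : Fin N → ℝ)
    (hp : ∀ j, plb j ≤ pub j) (hq : ∀ j, qlb j ≤ qub j)
    (he : ∀ j, elb j ≤ eub j) (he' : ∀ j, elb' j ≤ eub' j)
    (he'' : ∀ j, elb'' j ≤ eub'' j)
    -- Assumption 1 for the next transition
    (hA1 : ∀ j, ∀ x : ℝ, elb' j ≤ x → x ≤ eub' j →
      max (elb'' j) (x + δ * qlb j) ≤ min (eub'' j) (x + δ * qub j))
    -- Assumption 2(a) for the next transition
    (hA2a : ∀ j, ∃ x : ℝ, elb' j ≤ x ∧ x ≤ eub' j ∧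
      elb'' j ≤ x + δ * qlb j ∧ x + δ * qub j ≤ eub'' j)
    -- Assumption 2(b) for the next transition
    (hA2b : ∀ j, elb' j + δ * qlb j ≤ elb'' j ∧ eub'' j ≤ eub' j + δ * qub j)
    (E E' : ℝ) (e : Fin N → ℝ)
    -- e ∈ D(E)
    (hmem : (∀ j, elb j ≤ e j ∧ e j ≤ eub j) ∧ ∑ j, e j = E)
    -- e is a consistent dispersion of E for the current transition
    (hcons : max (∑ j, elb' j) (E + δ * ∑ j, plb j)
          = ∑ j, max (elb' j) (e j + δ * plb j) ∧
        min (∑ j, eub' j) (E + δ * ∑ j, pub j)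
          = ∑ j, min (eub' j) (e j + δ * pub j))
    (hE' : ∑ j, elb' j ≤ E' ∧ E' ≤ ∑ j, eub' j) :
    ∃ e' : Fin N → ℝ,
      (∀ j, elb' j ≤ e' j ∧ e' j ≤ eub' j) ∧ (∑ j, e' j = E') ∧
      max (∑ j, elb'' j) (E' + δ * ∑ j, qlb j)
        = ∑ j, max (elb'' j) (e' j + δ * qlb j) ∧
      min (∑ j, eub'' j) (E' + δ * ∑ j, qub j)
        = ∑ j, min (eub'' j) (e' j + δ * qub j) :=
  recursive_existence_of_consistent_dispersions_general N δ qlb qub elb' eub' elb'' eub'' hA2a hA2b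
    E' hE'
end

section
/- (Tracking feasibility of consistently dispersed schedules.) Suppose Assumption 1 holds, let E ∈ ℝ, and let e ∈ D(E) be a consistent dispersion of E. Then for every E' with max(Σ_j e̲'_j, E + δ·Σ_j p̲_j) ≤ E' ≤ min(Σ_j ē'_j, E + δ·Σ_j p̄_j), there exists a power vector p ∈ ℝ^N such that p̲_j ≤ p_j ≤ p̄_j and e̲'_j ≤ e_j + δ·p_j ≤ ē'_j for every j, and Σ_j (e_j + δ·p_j) = E'. -/
open Finset

/-- Tracking feasibility of consistently dispersed schedules: if `e` is a consistent
dispersion of `E`, any aggregated target `E'` in the aggregated feasible-and-reachable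
interval can be realized by individually feasible device powers. -/
theorem tracking_feasibility_of_consistent_dispersion
    (N : ℕ) (hN : 1 ≤ N) (δ : ℝ) (hδ : 0 < δ)
    (plb pub elb eub elb' eub' : Fin N → ℝ)
    (hp : ∀ j, plb j ≤ pub j) (he : ∀ j, elb j ≤ eub j)
    (he' : ∀ j, elb' j ≤ eub' j)
    -- Assumption 1 (consistency of constraints)
    (hA1 : ∀ j, ∀ x : ℝ, elb j ≤ x → x ≤ eub j →
      max (elb' j) (x + δ * plb j) ≤ min (eub' j) (x + δ * pub j))
    (E : ℝ) (e : Fin N → ℝ)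
    -- e ∈ D(E)
    (hmem : (∀ j, elb j ≤ e j ∧ e j ≤ eub j) ∧ ∑ j, e j = E)
    -- e is a consistent dispersion of E
    (hcons : max (∑ j, elb' j) (E + δ * ∑ j, plb j)
          = ∑ j, max (elb' j) (e j + δ * plb j) ∧
        min (∑ j, eub' j) (E + δ * ∑ j, pub j)
          = ∑ j, min (eub' j) (e j + δ * pub j))
    (E' : ℝ)
    (hE' : max (∑ j, elb' j) (E + δ * ∑ j, plb j) ≤ E' ∧
      E' ≤ min (∑ j, eub' j) (E + δ * ∑ j, pub j)) :
    ∃ p : Fin N → ℝ,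
      (∀ j, plb j ≤ p j ∧ p j ≤ pub j) ∧
      (∀ j, elb' j ≤ e j + δ * p j ∧ e j + δ * p j ≤ eub' j) ∧
      ∑ j, (e j + δ * p j) = E' := by
  obtain ⟨hbox, hsum⟩ := hmem
  obtain ⟨hc1, hc2⟩ := hcons
  obtain ⟨hE1, hE2⟩ := hE'
  set L : Fin N → ℝ := fun j => max (elb' j) (e j + δ * plb j) with hL
  set U : Fin N → ℝ := fun j => min (eub' j) (e j + δ * pub j) with hU
  have hLU : ∀ j, L j ≤ U j := fun j => hA1 j (e j) (hbox j).1 (hbox j).2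
  set S := ∑ j, L j with hS
  set T := ∑ j, U j with hT
  have hSE : S ≤ E' := by rw [hc1] at hE1; exact hE1
  have hET : E' ≤ T := by rw [hc2] at hE2; exact hE2
  set t : ℝ := if h : S < T then (E' - S) / (T - S) else 0 with ht
  have ht0 : 0 ≤ t := by
    rw [ht]; split_ifs with h
    · exact div_nonneg (by linarith) (by linarith)
    · exact le_refl 0
  have ht1 : t ≤ 1 := by
    rw [ht]; split_ifs with h
    · rw [div_le_one (by linarith)]; linarith
    · norm_num
  refine ⟨fun j => ((L j + t * (U j - L j)) - e j) / δ, ?_, ?_, ?_⟩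
  all_goals
    have key : ∀ j, e j + δ * (((L j + t * (U j - L j)) - e j) / δ) = L j + t * (U j - L j) := by
      intro j; field_simp; ring
  · intro j
    have h1 : e j + δ * plb j ≤ L j := le_max_right _ _
    have h2 : U j ≤ e j + δ * pub j := min_le_right _ _
    have hlo : L j ≤ L j + t * (U j - L j) := by nlinarith [hLU j]
    have hhi : L j + t * (U j - L j) ≤ U j := by nlinarith [hLU j]
    constructor
    · show plb j ≤ (L j + t * (U j - L j) - e j) / δ
      rw [le_div_iff₀ hδ]
      nlinarith
    · show (L j + t * (U j - L j) - e j) / δ ≤ pub j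
      rw [div_le_iff₀ hδ]
      nlinarith
  · intro j
    rw [key j]
    have h1 : elb' j ≤ L j := le_max_left _ _
    have h2 : U j ≤ eub' j := min_le_left _ _
    constructor
    · nlinarith [hLU j]
    · nlinarith [hLU j]
  · have : ∑ j, (e j + δ * (((L j + t * (U j - L j)) - e j) / δ))
        = ∑ j, (L j + t * (U j - L j)) := Finset.sum_congr rfl fun j _ => key j
    rw [this, Finset.sum_add_distrib, ← Finset.mul_sum, Finset.sum_sub_distrib,
      ← hS, ← hT]
    rw [ht]; split_ifs with h
    · rw [div_mul_cancel₀ _ (sub_ne_zero.mpr (ne_of_gt h))]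
      ring
    · have hTS : T = S := le_antisymm (not_lt.mp h) (by
        rw [hS, hT]; exact Finset.sum_le_sum fun j _ => hLU j)
      rw [hTS] at hET ⊢
      simp; linarith
end

section
/- (Consistent dispersions exist along the whole horizon.) Fix N ≥ 1 devices, δ > 0, and a horizon K ≥ 1. For each step k ∈ {0,…,K} let e̲_j(k) ≤ ē_j(k) be energy bounds, and for each k ∈ {0,…,K−1} let p̲_j(k) ≤ p̄_j(k) be power bounds, such that Assumptions 1 and 2 hold for every transition k → k+1. Let E(0),…,E(K) be real numbers such that max(Σ_j e̲_j(k+1), E(k) + δ·Σ_j p̲_j(k)) ≤ E(k+1) ≤ min(Σ_j ē_j(k+1), E(k) + δ·Σ_j p̄_j(k)) for every k ∈ {0,…,K−1}, and suppose there exists a consistent dispersion of E(0) at step 0. Then for every k ∈ {0,…,K−1} there exists a consistent dispersion of E(k) at step k. -/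
/-!
The identity `max (∑ a) (∑ g) = ∑ max (a j) (g j)` holds as soon as `g ≤ a` or `a ≤ g`
componentwise. For `g j = e j + δ * p̲_j(k)` this asks that every device lies on the same side
of its threshold `z_j = e̲_j(k+1) - δ * p̲_j(k)`; likewise for the upper identity and
`y_j = ē_j(k+1) - δ * p̄_j(k)`. Assumption 2 gives the chain `e̲(k) ≤ z ≤ y ≤ ē(k)`, and
feasibility of the aggregated schedule puts `E(k)` between `∑ e̲(k)` and `∑ ē(k)`. Moving `e`
along the broken line `e̲(k) → z → y → ē(k)`, the sum passes through `E(k)` at a point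
comparable with both `z` and `y`.
-/

open Finset

theorem Finset.sum_max_eq_max_sum_of_le_or_le {ι α : Type*} [AddCommMonoid α] [LinearOrder α]
    [IsOrderedAddMonoid α] (s : Finset ι) {f g : ι → α} (h : f ≤ g ∨ g ≤ f) :
    ∑ i ∈ s, max (f i) (g i) = max (∑ i ∈ s, f i) (∑ i ∈ s, g i) := by
  rcases h with h | h
  · rw [max_eq_right (sum_le_sum fun i _ => h i)]
    exact sum_congr rfl fun i _ => max_eq_right (h i)
  · rw [max_eq_left (sum_le_sum fun i _ => h i)]
    exact sum_congr rfl fun i _ => max_eq_left (h i)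

theorem Finset.sum_min_eq_min_sum_of_le_or_le {ι α : Type*} [AddCommMonoid α] [LinearOrder α]
    [IsOrderedAddMonoid α] (s : Finset ι) {f g : ι → α} (h : f ≤ g ∨ g ≤ f) :
    ∑ i ∈ s, min (f i) (g i) = min (∑ i ∈ s, f i) (∑ i ∈ s, g i) := by
  rcases h with h | h
  · rw [min_eq_left (sum_le_sum fun i _ => h i)]
    exact sum_congr rfl fun i _ => min_eq_left (h i)
  · rw [min_eq_right (sum_le_sum fun i _ => h i)]
    exact sum_congr rfl fun i _ => min_eq_right (h i)

variable {ι : Type*} [Fintype ι]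

theorem exists_mem_Icc_sum_eq_s15 {v w : ι → ℝ} (hvw : v ≤ w) {E : ℝ}
    (hv : ∑ i, v i ≤ E) (hw : E ≤ ∑ i, w i) : ∃ e ∈ Set.Icc v w, ∑ i, e i = E := by
  have hcont : Continuous fun t : ℝ => ∑ i, (v i + t * (w i - v i)) := by fun_prop
  obtain ⟨t, ⟨ht0, ht1⟩, hsum⟩ := intermediate_value_Icc zero_le_one hcont.continuousOn
    (by simpa using And.intro hv hw)
  refine ⟨fun i => v i + t * (w i - v i), ⟨fun i => ?_, fun i => ?_⟩, hsum⟩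
  · have := mul_nonneg ht0 (sub_nonneg.2 (hvw i)); simp only; linarith
  · have := mul_le_of_le_one_left (sub_nonneg.2 (hvw i)) ht1; simp only; linarith

theorem exists_mem_Icc_sum_eq_comparable {L z y U : ι → ℝ} (hLz : L ≤ z) (hzy : z ≤ y)
    (hyU : y ≤ U) {E : ℝ} (hL : ∑ i, L i ≤ E) (hU : E ≤ ∑ i, U i) :
    ∃ e ∈ Set.Icc L U, ∑ i, e i = E ∧ (e ≤ z ∨ z ≤ e) ∧ (e ≤ y ∨ y ≤ e) := by
  rcases le_total E (∑ i, z i) with hEz | hzE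
  · obtain ⟨e, ⟨hLe, hez⟩, hsum⟩ := exists_mem_Icc_sum_eq_s15 hLz hL hEz
    exact ⟨e, ⟨hLe, hez.trans (hzy.trans hyU)⟩, hsum, .inl hez, .inl (hez.trans hzy)⟩
  rcases le_total E (∑ i, y i) with hEy | hyE
  · obtain ⟨e, ⟨hze, hey⟩, hsum⟩ := exists_mem_Icc_sum_eq_s15 hzy hzE hEy
    exact ⟨e, ⟨hLz.trans hze, hey.trans hyU⟩, hsum, .inr hze, .inl hey⟩
  · obtain ⟨e, ⟨hye, heU⟩, hsum⟩ := exists_mem_Icc_sum_eq_s15 hyU hyE hU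
    exact ⟨e, ⟨(hLz.trans hzy).trans hye, heU⟩, hsum, .inr (hzy.trans hye), .inr hye⟩

theorem exists_consistent_dispersion (δ : ℝ) {L U a b p q : ι → ℝ}
    (hA2a : ∀ j, ∃ x : ℝ, L j ≤ x ∧ x ≤ U j ∧ a j ≤ x + δ * p j ∧ x + δ * q j ≤ b j)
    (hA2b : ∀ j, L j + δ * p j ≤ a j ∧ b j ≤ U j + δ * q j)
    {E : ℝ} (hL : ∑ j, L j ≤ E) (hU : E ≤ ∑ j, U j) :
    ∃ e : ι → ℝ, (∀ j, L j ≤ e j ∧ e j ≤ U j) ∧ (∑ j, e j = E) ∧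
      max (∑ j, a j) (E + δ * ∑ j, p j) = ∑ j, max (a j) (e j + δ * p j) ∧
      min (∑ j, b j) (E + δ * ∑ j, q j) = ∑ j, min (b j) (e j + δ * q j) := by
  have hLz : L ≤ fun j => a j - δ * p j := fun j => by linarith [(hA2b j).1]
  have hzy : (fun j => a j - δ * p j) ≤ fun j => b j - δ * q j := fun j => by
    obtain ⟨x, -, -, hax, hxb⟩ := hA2a j
    linarith
  have hyU : (fun j => b j - δ * q j) ≤ U := fun j => by linarith [(hA2b j).2]
  obtain ⟨e, ⟨hLe, heU⟩, hsum, hz, hy⟩ :=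
    exists_mem_Icc_sum_eq_comparable hLz hzy hyU hL hU
  have hshift (r : ι → ℝ) : E + δ * ∑ j, r j = ∑ j, (e j + δ * r j) := by
    rw [sum_add_distrib, hsum, mul_sum]
  refine ⟨e, fun j => ⟨hLe j, heU j⟩, hsum, ?_, ?_⟩
  · rw [hshift, sum_max_eq_max_sum_of_le_or_le]
    refine hz.symm.imp (fun h j => ?_) (fun h j => ?_) <;> linarith [h j]
  · rw [hshift, sum_min_eq_min_sum_of_le_or_le]
    refine hy.symm.imp (fun h j => ?_) (fun h j => ?_) <;> linarith [h j]

theorem consistent_dispersions_along_horizon_general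
    (N : ℕ) (δ : ℝ) (K : ℕ)
    (elb eub : ℕ → Fin N → ℝ) (plb pub : ℕ → Fin N → ℝ)
    -- Assumption 2(a) for every transition k → k+1
    (hA2a : ∀ k < K, ∀ j, ∃ x : ℝ, elb k j ≤ x ∧ x ≤ eub k j ∧
      elb (k+1) j ≤ x + δ * plb k j ∧ x + δ * pub k j ≤ eub (k+1) j)
    -- Assumption 2(b) for every transition k → k+1
    (hA2b : ∀ k < K, ∀ j,
      elb k j + δ * plb k j ≤ elb (k+1) j ∧ eub (k+1) j ≤ eub k j + δ * pub k j)
    (E : ℕ → ℝ)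
    -- the aggregated schedule is feasible for the aggregated model
    (hE : ∀ k < K,
      max (∑ j, elb (k+1) j) (E k + δ * ∑ j, plb k j) ≤ E (k+1) ∧
      E (k+1) ≤ min (∑ j, eub (k+1) j) (E k + δ * ∑ j, pub k j))
    -- a consistent dispersion of E 0 exists at step 0
    (h0 : ∃ e : Fin N → ℝ,
      (∀ j, elb 0 j ≤ e j ∧ e j ≤ eub 0 j) ∧ (∑ j, e j = E 0) ∧
      max (∑ j, elb 1 j) (E 0 + δ * ∑ j, plb 0 j)
        = ∑ j, max (elb 1 j) (e j + δ * plb 0 j) ∧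
      min (∑ j, eub 1 j) (E 0 + δ * ∑ j, pub 0 j)
        = ∑ j, min (eub 1 j) (e j + δ * pub 0 j)) :
    ∀ k < K, ∃ e : Fin N → ℝ,
      (∀ j, elb k j ≤ e j ∧ e j ≤ eub k j) ∧ (∑ j, e j = E k) ∧
      max (∑ j, elb (k+1) j) (E k + δ * ∑ j, plb k j)
        = ∑ j, max (elb (k+1) j) (e j + δ * plb k j) ∧
      min (∑ j, eub (k+1) j) (E k + δ * ∑ j, pub k j)
        = ∑ j, min (eub (k+1) j) (e j + δ * pub k j) := by
  rintro (_ | m) hk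
  · exact h0
  · obtain ⟨hElb, hEub⟩ := hE m (Nat.lt_of_succ_lt hk)
    exact exists_consistent_dispersion δ (hA2a (m+1) hk) (hA2b (m+1) hk)
      ((le_max_left _ _).trans hElb) (hEub.trans (min_le_left _ _))

/-- Consistent dispersions exist along the whole horizon: if Assumptions 1 and 2 hold
for every transition, the aggregated schedule is feasible for the aggregated model at
every step, and the initial aggregated energy admits a consistent dispersion, then a
consistent dispersion exists at every step of the horizon. -/
theorem consistent_dispersions_along_horizon
    (N : ℕ) (hN : 1 ≤ N) (δ : ℝ) (hδ : 0 < δ) (K : ℕ) (hK : 1 ≤ K)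
    (elb eub : ℕ → Fin N → ℝ) (plb pub : ℕ → Fin N → ℝ)
    (he : ∀ k ≤ K, ∀ j, elb k j ≤ eub k j)
    (hp : ∀ k < K, ∀ j, plb k j ≤ pub k j)
    -- Assumption 1 for every transition k → k+1
    (hA1 : ∀ k < K, ∀ j, ∀ x : ℝ, elb k j ≤ x → x ≤ eub k j →
      max (elb (k+1) j) (x + δ * plb k j) ≤ min (eub (k+1) j) (x + δ * pub k j))
    -- Assumption 2(a) for every transition k → k+1
    (hA2a : ∀ k < K, ∀ j, ∃ x : ℝ, elb k j ≤ x ∧ x ≤ eub k j ∧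
      elb (k+1) j ≤ x + δ * plb k j ∧ x + δ * pub k j ≤ eub (k+1) j)
    -- Assumption 2(b) for every transition k → k+1
    (hA2b : ∀ k < K, ∀ j,
      elb k j + δ * plb k j ≤ elb (k+1) j ∧ eub (k+1) j ≤ eub k j + δ * pub k j)
    (E : ℕ → ℝ)
    -- the aggregated schedule is feasible for the aggregated model
    (hE : ∀ k < K,
      max (∑ j, elb (k+1) j) (E k + δ * ∑ j, plb k j) ≤ E (k+1) ∧
      E (k+1) ≤ min (∑ j, eub (k+1) j) (E k + δ * ∑ j, pub k j))
    -- a consistent dispersion of E 0 exists at step 0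
    (h0 : ∃ e : Fin N → ℝ,
      (∀ j, elb 0 j ≤ e j ∧ e j ≤ eub 0 j) ∧ (∑ j, e j = E 0) ∧
      max (∑ j, elb 1 j) (E 0 + δ * ∑ j, plb 0 j)
        = ∑ j, max (elb 1 j) (e j + δ * plb 0 j) ∧
      min (∑ j, eub 1 j) (E 0 + δ * ∑ j, pub 0 j)
        = ∑ j, min (eub 1 j) (e j + δ * pub 0 j)) :
    ∀ k < K, ∃ e : Fin N → ℝ,
      (∀ j, elb k j ≤ e j ∧ e j ≤ eub k j) ∧ (∑ j, e j = E k) ∧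
      max (∑ j, elb (k+1) j) (E k + δ * ∑ j, plb k j)
        = ∑ j, max (elb (k+1) j) (e j + δ * plb k j) ∧
      min (∑ j, eub (k+1) j) (E k + δ * ∑ j, pub k j)
        = ∑ j, min (eub (k+1) j) (e j + δ * pub k j) :=
  consistent_dispersions_along_horizon_general N δ K elb eub plb pub hA2a hA2b E hE h0
end
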